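/- For any permutation σ ∈ S_n, applying the operator ∇ = Σ_i ∂/∂x_i to the Schubert polynomial 𝔖_σ yields ∇𝔖_σ = Σ i · 𝔖_{σs_i}, where the sum is over all i such that σs_i ⋖ σ is a cover in the right weak order (i.e., ℓ(σs_i) = ℓ(σ) - 1). -/

import Mathlib

/-!
Downward induction on `σ` in the left weak order, starting from `w₀`. The operator
`∇ = ∑ ∂ᵢ` commutes with permutations of the variables and with multiplication by
`xᵢ - xᵢ₊₁` (as `∇ (xᵢ - xᵢ₊₁) = 0`), hence with the divided difference `Nᵢ`.
If `sᵢσ` covers `σ`, applying `Nᵢ` to the identity for `𝔖_{sᵢσ}` gives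
`∇𝔖_σ = ∑ⱼ j ⬝ Nᵢ 𝔖_{sᵢσsⱼ}`; the `j`-th term is `j ⬝ 𝔖_{σsⱼ}` when `σsⱼ ⋖ σ`,
and vanishes otherwise because `𝔖_{sᵢσsⱼ}` is then `sᵢ`-symmetric.
At `w₀`, `∇ x^δ = ∑ₖ (n - k) x^δ / xₖ` and `x^δ / xₖ = 𝔖_{sₖw₀} = 𝔖_{w₀sₙ₋ₖ}`.
Lengths are controlled throughout by identifying them with numbers of inversions.
-/

open Equiv MvPolynomial

/-- The adjacent transposition `s i`, swapping positions `i` and `i+1` (0-indexed). -/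
def simpleT {n : ℕ} (i : Fin n) : Equiv.Perm (Fin (n+1)) := Equiv.swap i.castSucc i.succ

/-- Coxeter length: minimal length of a word in adjacent transpositions. -/
noncomputable def len {n : ℕ} (σ : Equiv.Perm (Fin (n+1))) : ℕ :=
  sInf {k | ∃ l : List (Fin n), l.length = k ∧ (l.map simpleT).prod = σ}

/-- `S` is the family of Schubert polynomials: `S w₀ = x₁^{n-1} ⋯ x_{n-1}`, and
`S (sᵢ σ)` is the `i`-th divided difference of `S σ` when `ℓ(sᵢσ) = ℓ(σ) - 1`
(stated multiplied through by `xᵢ - xᵢ₊₁`). -/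
def IsSchubertFamily {n : ℕ} (S : Equiv.Perm (Fin (n+1)) → MvPolynomial (Fin (n+1)) ℂ) : Prop :=
  S Fin.revPerm = ∏ i : Fin (n+1), X i ^ (n - (i : ℕ)) ∧
  ∀ (σ : Equiv.Perm (Fin (n+1))) (i : Fin n), len σ = len (simpleT i * σ) + 1 →
    (X i.castSucc - X i.succ) * S (simpleT i * σ) =
      S σ - rename (Equiv.swap i.castSucc i.succ) (S σ)

open Finset

section Permutations

variable {n : ℕ}

lemma simpleT_mul_self (i : Fin n) : simpleT i * simpleT i = 1 := swap_mul_self _ _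

lemma simpleT_mul_simpleT_mul (i : Fin n) (σ : Perm (Fin (n+1))) :
    simpleT i * (simpleT i * σ) = σ := by
  rw [← mul_assoc, simpleT_mul_self, one_mul]

lemma simpleT_inv (i : Fin n) : (simpleT i)⁻¹ = simpleT i := swap_inv _ _

lemma exists_prod_map_simpleT_eq (σ : Perm (Fin (n+1))) :
    ∃ l : List (Fin n), (l.map simpleT).prod = σ := by
  have hσ : σ ∈ Submonoid.closure (Set.range fun i : Fin n ↦ swap i.castSucc i.succ) := by
    rw [Perm.mclosure_swap_castSucc_succ n]; trivial
  induction hσ using Submonoid.closure_induction with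
  | mem x hx => obtain ⟨i, rfl⟩ := hx; exact ⟨[i], by simp [simpleT]⟩
  | one => exact ⟨[], rfl⟩
  | mul x y _ _ hx hy =>
    obtain ⟨l₁, rfl⟩ := hx; obtain ⟨l₂, rfl⟩ := hy
    exact ⟨l₁ ++ l₂, by simp⟩

lemma len_le_length {σ : Perm (Fin (n+1))} {l : List (Fin n)} (h : (l.map simpleT).prod = σ) :
    len σ ≤ l.length :=
  Nat.sInf_le ⟨l, rfl, h⟩

lemma exists_length_eq_len (σ : Perm (Fin (n+1))) :
    ∃ l : List (Fin n), l.length = len σ ∧ (l.map simpleT).prod = σ := by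
  obtain ⟨l, hl⟩ := exists_prod_map_simpleT_eq σ
  exact Nat.sInf_mem (s := {k | ∃ l : List (Fin n), l.length = k ∧ (l.map simpleT).prod = σ})
    ⟨l.length, l, rfl, hl⟩

lemma len_inv_le (σ : Perm (Fin (n+1))) : len σ⁻¹ ≤ len σ := by
  obtain ⟨l, hl, rfl⟩ := exists_length_eq_len σ
  refine hl ▸ l.length_reverse ▸ len_le_length ?_
  rw [List.map_reverse, List.prod_reverse_noncomm, List.map_map]
  simp [Function.comp_def, simpleT_inv]

lemma len_inv (σ : Perm (Fin (n+1))) : len σ⁻¹ = len σ :=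
  (len_inv_le σ).antisymm (by simpa using len_inv_le σ⁻¹)

lemma len_mul_simpleT_le (σ : Perm (Fin (n+1))) (i : Fin n) :
    len (σ * simpleT i) ≤ len σ + 1 := by
  obtain ⟨l, hl, rfl⟩ := exists_length_eq_len σ
  refine hl ▸ (len_le_length (l := l ++ [i]) (by simp)).trans_eq (by simp)

lemma len_simpleT_mul (i : Fin n) (σ : Perm (Fin (n+1))) :
    len (simpleT i * σ) = len (σ⁻¹ * simpleT i) := by
  rw [← len_inv, mul_inv_rev, simpleT_inv]

def inversions (σ : Perm (Fin (n+1))) : Finset (Fin (n+1) × Fin (n+1)) :=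
  {p | p.1 < p.2 ∧ σ p.2 < σ p.1}

lemma simpleT_lt_simpleT_iff (i : Fin n) {a b : Fin (n+1)} :
    simpleT i a < simpleT i b ↔
      (a < b ∧ ¬(a = i.castSucc ∧ b = i.succ)) ∨ (a = i.succ ∧ b = i.castSucc) := by
  simp only [simpleT, swap_apply_def, Fin.lt_def, Fin.ext_iff, apply_ite Fin.val, Fin.val_succ,
    Fin.val_castSucc]
  split_ifs <;> omega

lemma card_inversions_mul_simpleT_of_lt {σ : Perm (Fin (n+1))} {i : Fin n}
    (h : σ i.castSucc < σ i.succ) : #(inversions (σ * simpleT i)) = #(inversions σ) + 1 := by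
  -- Relabelling pairs by `sᵢ`, the inversions of `σ sᵢ` become those of `σ` plus `(i+1, i)`.
  have hswap : #(inversions (σ * simpleT i)) =
      #{q : Fin (n+1) × Fin (n+1) | simpleT i q.1 < simpleT i q.2 ∧ σ q.2 < σ q.1} := by
    refine card_equiv (.prodCongr (simpleT i) (simpleT i)) fun p ↦ ?_
    simp only [inversions, mem_filter, mem_univ, true_and, prodCongr_apply, Prod.map,
      ← Perm.mul_apply, simpleT_mul_self, Perm.one_apply]
  have hinsert :
      ({q | simpleT i q.1 < simpleT i q.2 ∧ σ q.2 < σ q.1} : Finset (Fin (n+1) × Fin (n+1))) =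
        insert (i.succ, i.castSucc) (inversions σ) := by
    ext ⟨a, b⟩
    simp only [inversions, mem_filter, mem_univ, true_and, mem_insert, Prod.mk.injEq,
      simpleT_lt_simpleT_iff]
    constructor
    · rintro ⟨⟨hab, -⟩ | hab, hσ⟩ <;> tauto
    · rintro (⟨rfl, rfl⟩ | ⟨hab, hσ⟩)
      · exact ⟨.inr ⟨rfl, rfl⟩, h⟩
      · refine ⟨.inl ⟨hab, ?_⟩, hσ⟩
        rintro ⟨rfl, rfl⟩
        exact lt_asymm h hσ
  rw [hswap, hinsert, card_insert_of_notMem]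
  simp [inversions, (Fin.castSucc_lt_succ (i := i)).not_gt]

lemma card_inversions_mul_simpleT_of_gt {σ : Perm (Fin (n+1))} {i : Fin n}
    (h : σ i.succ < σ i.castSucc) : #(inversions σ) = #(inversions (σ * simpleT i)) + 1 := by
  have := card_inversions_mul_simpleT_of_lt (σ := σ * simpleT i) (i := i) (by simpa [simpleT])
  rwa [mul_assoc, simpleT_mul_self, mul_one] at this

lemma Equiv.Perm.eq_one_of_strictMono {α : Type*} [LinearOrder α] [WellFoundedLT α]
    {σ : Perm α} (h : StrictMono σ) : σ = 1 := by
  ext x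
  exact congrArg (· x) (Subsingleton.elim (h.orderIsoOfSurjective σ σ.surjective) (.refl α))

lemma exists_lt_of_ne_one {σ : Perm (Fin (n+1))} (h : σ ≠ 1) :
    ∃ i : Fin n, σ i.succ < σ i.castSucc := by
  contrapose! h
  exact Perm.eq_one_of_strictMono <| Fin.strictMono_iff_lt_succ.2 fun i ↦
    (h i).lt_of_ne (σ.injective.ne (Fin.castSucc_lt_succ (i := i)).ne)

lemma card_inversions_le_length (l : List (Fin n)) :
    #(inversions ((l.map simpleT).prod : Perm (Fin (n+1)))) ≤ l.length := by
  induction l using List.reverseRecOn with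
  | nil => simpa [inversions] using fun _ _ ↦ le_of_lt
  | append_singleton l i ih =>
    simp only [List.map_append, List.prod_append, List.map_singleton, List.prod_singleton,
      List.length_append, List.length_singleton] at ih ⊢
    set σ : Perm (Fin (n+1)) := (l.map simpleT).prod
    rcases lt_or_gt_of_ne (σ.injective.ne (Fin.castSucc_lt_succ (i := i)).ne) with h | h
    · rw [card_inversions_mul_simpleT_of_lt h]; omega
    · have := card_inversions_mul_simpleT_of_gt h; omega

lemma len_le_card_inversions (σ : Perm (Fin (n+1))) : len σ ≤ #(inversions σ) := by
  induction h : #(inversions σ) using Nat.strong_induction_on generalizing σ with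
  | _ m ih =>
    rcases eq_or_ne σ 1 with rfl | hσ
    · exact (len_le_length (l := []) rfl).trans (Nat.zero_le _)
    obtain ⟨i, hi⟩ := exists_lt_of_ne_one hσ
    have hcard := card_inversions_mul_simpleT_of_gt hi
    calc len σ = len (σ * simpleT i * simpleT i) := by rw [mul_assoc, simpleT_mul_self, mul_one]
      _ ≤ len (σ * simpleT i) + 1 := len_mul_simpleT_le _ _
      _ ≤ m := by have := ih _ (by omega) (σ * simpleT i) rfl; omega

lemma len_eq_card_inversions (σ : Perm (Fin (n+1))) : len σ = #(inversions σ) := by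
  refine (len_le_card_inversions σ).antisymm ?_
  obtain ⟨l, hl, rfl⟩ := exists_length_eq_len σ
  exact hl ▸ card_inversions_le_length l

lemma len_mul_simpleT_of_lt {σ : Perm (Fin (n+1))} {i : Fin n} (h : σ i.castSucc < σ i.succ) :
    len (σ * simpleT i) = len σ + 1 := by
  simp only [len_eq_card_inversions, card_inversions_mul_simpleT_of_lt h]

lemma len_mul_simpleT_of_gt {σ : Perm (Fin (n+1))} {i : Fin n} (h : σ i.succ < σ i.castSucc) :
    len σ = len (σ * simpleT i) + 1 := by
  simp only [len_eq_card_inversions, card_inversions_mul_simpleT_of_gt h]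

lemma len_mul_simpleT_cases (σ : Perm (Fin (n+1))) (i : Fin n) :
    len (σ * simpleT i) = len σ + 1 ∨ len σ = len (σ * simpleT i) + 1 :=
  (lt_or_gt_of_ne (σ.injective.ne (Fin.castSucc_lt_succ (i := i)).ne)).imp
    len_mul_simpleT_of_lt len_mul_simpleT_of_gt

lemma len_simpleT_mul_cases (i : Fin n) (σ : Perm (Fin (n+1))) :
    len (simpleT i * σ) = len σ + 1 ∨ len σ = len (simpleT i * σ) + 1 := by
  simpa only [len_simpleT_mul, len_inv] using len_mul_simpleT_cases σ⁻¹ i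

lemma len_le_len_revPerm (σ : Perm (Fin (n+1))) :
    len σ ≤ len (Fin.revPerm : Perm (Fin (n+1))) := by
  simp only [len_eq_card_inversions]
  refine card_le_card fun p hp ↦ ?_
  simp only [inversions, mem_filter, mem_univ, true_and, Fin.revPerm_apply,
    Fin.rev_lt_rev] at hp ⊢
  exact ⟨hp.1, hp.1⟩

lemma len_revPerm_mul_simpleT (i : Fin n) :
    len (Fin.revPerm : Perm (Fin (n+1))) = len (Fin.revPerm * simpleT i) + 1 :=
  len_mul_simpleT_of_gt (Fin.rev_lt_rev.2 Fin.castSucc_lt_succ)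

lemma revPerm_mul_simpleT (i : Fin n) :
    (Fin.revPerm : Perm (Fin (n+1))) * simpleT i = simpleT i.rev * Fin.revPerm := by
  rw [simpleT, mul_swap_eq_swap_mul, simpleT, Fin.revPerm_apply, Fin.revPerm_apply,
    Fin.rev_castSucc, Fin.rev_succ, swap_comm]

lemma exists_len_simpleT_mul_eq_succ {σ : Perm (Fin (n+1))} (h : σ ≠ Fin.revPerm) :
    ∃ i : Fin n, len (simpleT i * σ) = len σ + 1 := by
  by_contra! hno
  have hanti : StrictAnti ⇑σ⁻¹ := Fin.strictAnti_iff_succ_lt.2 fun i ↦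
    (lt_or_gt_of_ne (σ⁻¹.injective.ne Fin.castSucc_lt_succ.ne)).resolve_left fun hi ↦
      hno i (by rw [len_simpleT_mul, len_mul_simpleT_of_lt hi, len_inv])
  have hone : Fin.revPerm * σ⁻¹ = 1 :=
    Perm.eq_one_of_strictMono (Fin.rev_strictAnti.comp hanti)
  exact h (by simpa using (mul_eq_one_iff_eq_inv.1 hone).symm)

lemma induction_from_revPerm {P : Perm (Fin (n+1)) → Prop} (top : P Fin.revPerm)
    (step : ∀ σ i, len (simpleT i * σ) = len σ + 1 → P (simpleT i * σ) → P σ)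
    (σ : Perm (Fin (n+1))) : P σ := by
  induction h : len (Fin.revPerm : Perm (Fin (n+1))) - len σ using Nat.strong_induction_on
    generalizing σ with
  | _ m ih =>
    rcases eq_or_ne σ Fin.revPerm with rfl | hσ
    · exact top
    obtain ⟨i, hi⟩ := exists_len_simpleT_mul_eq_succ hσ
    exact step σ i hi (ih _ (by have := len_le_len_revPerm (simpleT i * σ); omega) _ rfl)

end Permutations

namespace MvPolynomial

section

variable {R ι : Type*}

lemma rename_swap_eq_of_X_sub_X_mul_eq [CommRing R] [IsDomain R] [DecidableEq ι] {a b : ι}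
    (hab : a ≠ b) {f g : MvPolynomial ι R} (h : (X a - X b) * g = f - rename (swap a b) f) :
    rename (swap a b) g = g := by
  have hswap := congrArg (rename (swap a b)) h
  have hinvol : rename (swap a b) (rename (swap a b) f) = f := by
    rw [rename_rename, ← Perm.coe_mul, swap_mul_self, Perm.coe_one, rename_id_apply]
  rw [map_mul, map_sub, map_sub, rename_X, rename_X, swap_apply_left, swap_apply_right,
    hinvol] at hswap
  refine mul_left_cancel₀ (sub_ne_zero.2 (X_injective.ne hab)) ?_
  linear_combination -hswap - h

variable [Fintype ι]

noncomputable def nabla [CommSemiring R] : Derivation R (MvPolynomial ι R) (MvPolynomial ι R) :=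
  ∑ i, pderiv i

lemma nabla_apply [CommSemiring R] (f : MvPolynomial ι R) : nabla f = ∑ i, pderiv i f := by
  rw [nabla, ← Derivation.coeFnAddMonoidHom_apply, map_sum, Finset.sum_apply]
  rfl

lemma nabla_rename [CommSemiring R] (e : ι ≃ ι) (f : MvPolynomial ι R) :
    nabla (rename e f) = rename e (nabla f) := by
  simp only [nabla_apply, map_sum]
  exact (Fintype.sum_equiv e _ _ fun i ↦ (pderiv_rename e.injective i f).symm).symm

lemma nabla_monomial [CommSemiring R] (d : ι →₀ ℕ) (a : R) :
    nabla (monomial d a) = ∑ i, monomial (d - Finsupp.single i 1) (a * d i) := by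
  simp [nabla_apply]

lemma nabla_X_sub_X_mul [CommRing R] (a b : ι) (f : MvPolynomial ι R) :
    nabla ((X a - X b) * f) = (X a - X b) * nabla f := by
  classical
  simp [Derivation.leibniz, nabla_apply, pderiv_X, Pi.single_apply]

end

noncomputable def staircase (n : ℕ) : Fin (n+1) →₀ ℕ :=
  Finsupp.equivFunOnFinite.symm fun i ↦ n - i

lemma staircase_apply {n : ℕ} (i : Fin (n+1)) : staircase n i = n - i := rfl

variable {R : Type*} [CommSemiring R] {n : ℕ}

lemma prod_X_pow_eq_monomial_staircase :
    ∏ i : Fin (n+1), (X i : MvPolynomial (Fin (n+1)) R) ^ (n - (i : ℕ)) =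
      monomial (staircase n) 1 := by
  rw [monomial_eq, C_1, one_mul, Finsupp.prod_fintype _ _ fun _ ↦ pow_zero _]
  rfl

lemma X_mul_monomial_staircase_sub_single (k : Fin n) :
    X k.castSucc * monomial (staircase n - Finsupp.single k.castSucc 1) (1 : R) =
      monomial (staircase n) 1 := by
  rw [← pow_one (X _), ← monomial_single_add]
  refine congrArg (monomial · 1) (Finsupp.ext fun i ↦ ?_)
  simp only [Finsupp.coe_add, Finsupp.coe_tsub, Pi.add_apply, Pi.sub_apply, staircase_apply,
    Finsupp.single_apply, Fin.ext_iff, Fin.val_castSucc]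
  split_ifs <;> omega

lemma rename_swap_monomial_staircase_sub_single (k : Fin n) :
    rename (swap k.castSucc k.succ)
        (monomial (staircase n - Finsupp.single k.castSucc 1) (1 : R)) =
      monomial (staircase n - Finsupp.single k.castSucc 1) 1 := by
  rw [rename_monomial]
  refine congrArg (monomial · 1) (Finsupp.ext fun i ↦ ?_)
  simp only [Finsupp.mapDomain_equiv_apply, symm_swap, Finsupp.coe_tsub, Pi.sub_apply,
    staircase_apply, Finsupp.single_apply, swap_apply_def, Fin.ext_iff, apply_ite Fin.val,
    Fin.val_castSucc, Fin.val_succ]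
  split_ifs <;> omega

end MvPolynomial

noncomputable def descentTerm {n : ℕ} (S : Perm (Fin (n+1)) → MvPolynomial (Fin (n+1)) ℂ)
    (σ : Perm (Fin (n+1))) (j : Fin n) : MvPolynomial (Fin (n+1)) ℂ :=
  if len σ = len (σ * simpleT j) + 1 then ((j : ℕ) + 1 : ℂ) • S (σ * simpleT j) else 0

namespace IsSchubertFamily

variable {n : ℕ} {S : Perm (Fin (n+1)) → MvPolynomial (Fin (n+1)) ℂ}

lemma X_sub_X_mul_eq (hS : IsSchubertFamily S) {σ : Perm (Fin (n+1))} {i : Fin n}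
    (h : len (simpleT i * σ) = len σ + 1) :
    (X i.castSucc - X i.succ) * S σ =
      S (simpleT i * σ) - rename (swap i.castSucc i.succ) (S (simpleT i * σ)) := by
  simpa only [simpleT_mul_simpleT_mul] using
    hS.2 (simpleT i * σ) i (by rwa [simpleT_mul_simpleT_mul])

lemma rename_swap_eq (hS : IsSchubertFamily S) {σ : Perm (Fin (n+1))} {i : Fin n}
    (h : len (simpleT i * σ) = len σ + 1) : rename (swap i.castSucc i.succ) (S σ) = S σ :=
  rename_swap_eq_of_X_sub_X_mul_eq Fin.castSucc_lt_succ.ne (hS.X_sub_X_mul_eq h)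

lemma simpleT_mul_revPerm (hS : IsSchubertFamily S) (k : Fin n) :
    S (simpleT k * Fin.revPerm) = monomial (staircase n - Finsupp.single k.castSucc 1) 1 := by
  have hlen : len (Fin.revPerm : Perm (Fin (n+1))) = len (simpleT k * Fin.revPerm) + 1 := by
    simpa [revPerm_mul_simpleT] using len_revPerm_mul_simpleT k.rev
  have hrec := hS.2 Fin.revPerm k hlen
  rw [hS.1, prod_X_pow_eq_monomial_staircase, ← X_mul_monomial_staircase_sub_single k, map_mul,
    rename_X, swap_apply_left, rename_swap_monomial_staircase_sub_single, ← sub_mul] at hrec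
  exact mul_left_cancel₀ (sub_ne_zero.2 (X_injective.ne Fin.castSucc_lt_succ.ne)) hrec

lemma nabla_revPerm (hS : IsSchubertFamily S) :
    nabla (S Fin.revPerm) = ∑ j, descentTerm S Fin.revPerm j := by
  have hterm (j : Fin n) : descentTerm S Fin.revPerm j =
      ((j : ℕ) + 1 : ℂ) • monomial (staircase n - Finsupp.single j.rev.castSucc 1) 1 := by
    rw [descentTerm, if_pos (len_revPerm_mul_simpleT j), revPerm_mul_simpleT,
      hS.simpleT_mul_revPerm]
  rw [hS.1, prod_X_pow_eq_monomial_staircase, nabla_monomial, Fin.sum_univ_castSucc,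
    staircase_apply (Fin.last n), Fin.val_last, Nat.sub_self, Nat.cast_zero, mul_zero,
    monomial_zero, add_zero, ← Equiv.sum_comp Fin.revPerm]
  refine sum_congr rfl fun j _ ↦ ?_
  rw [hterm, smul_monomial, Fin.revPerm_apply, staircase_apply, Fin.val_castSucc, Fin.val_rev]
  congr 1
  rw [one_mul, smul_eq_mul, mul_one, Nat.sub_sub_self j.isLt]
  exact Nat.cast_succ _

lemma descentTerm_sub_rename_swap (hS : IsSchubertFamily S) {σ : Perm (Fin (n+1))} {i : Fin n}
    (hasc : len (simpleT i * σ) = len σ + 1) (j : Fin n) :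
    descentTerm S (simpleT i * σ) j -
        rename (swap i.castSucc i.succ) (descentTerm S (simpleT i * σ) j) =
      (X i.castSucc - X i.succ) * descentTerm S σ j := by
  have hleft := len_simpleT_mul_cases i (σ * simpleT j)
  have hright := len_mul_simpleT_cases (simpleT i * σ) j
  rw [mul_assoc] at hright
  simp only [descentTerm, mul_assoc]
  rcases len_mul_simpleT_cases σ j with hup | hdown
  · rw [if_neg (show ¬len σ = len (σ * simpleT j) + 1 by omega), mul_zero]
    split_ifs
    · rw [map_smul, hS.rename_swap_eq (by rw [simpleT_mul_simpleT_mul]; omega), sub_self]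
    · rw [map_zero, sub_zero]
  · rw [if_pos (by omega), if_pos hdown, map_smul, ← smul_sub, mul_smul_comm,
      hS.X_sub_X_mul_eq (by omega)]

lemma nabla_eq_of_simpleT_mul (hS : IsSchubertFamily S) {σ : Perm (Fin (n+1))} {i : Fin n}
    (hasc : len (simpleT i * σ) = len σ + 1)
    (ih : nabla (S (simpleT i * σ)) = ∑ j, descentTerm S (simpleT i * σ) j) :
    nabla (S σ) = ∑ j, descentTerm S σ j := by
  refine mul_left_cancel₀ (sub_ne_zero.2 (X_injective.ne (Fin.castSucc_lt_succ (i := i)).ne)) ?_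
  calc (X i.castSucc - X i.succ) * nabla (S σ)
      = nabla (S (simpleT i * σ)) -
          rename (swap i.castSucc i.succ) (nabla (S (simpleT i * σ))) := by
        rw [← nabla_X_sub_X_mul, hS.X_sub_X_mul_eq hasc, map_sub, nabla_rename]
    _ = ∑ j, (X i.castSucc - X i.succ) * descentTerm S σ j := by
        simp only [ih, map_sum, ← sum_sub_distrib, hS.descentTerm_sub_rename_swap hasc]
    _ = (X i.castSucc - X i.succ) * ∑ j, descentTerm S σ j := (mul_sum _ _ _).symm

lemma nabla_eq (hS : IsSchubertFamily S) (σ : Perm (Fin (n+1))) :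
    nabla (S σ) = ∑ j, descentTerm S σ j :=
  induction_from_revPerm hS.nabla_revPerm
    (fun _ _ hasc ih ↦ hS.nabla_eq_of_simpleT_mul hasc ih) σ

end IsSchubertFamily

/-- Indices are `0`-based, so the coefficient of `simpleT i` is `i + 1`. -/
theorem nabla_schubert {n : ℕ} (S : Equiv.Perm (Fin (n+1)) → MvPolynomial (Fin (n+1)) ℂ)
    (hS : IsSchubertFamily S) (σ : Equiv.Perm (Fin (n+1))) :
    ∑ i : Fin (n+1), pderiv i (S σ) =
      ∑ i ∈ Finset.univ.filter (fun i : Fin n => len σ = len (σ * simpleT i) + 1),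
        (((i : ℕ) + 1 : ℂ)) • S (σ * simpleT i) := by
  rw [← nabla_apply, sum_filter]
  exact hS.nabla_eq σ
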